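/- If G is a finite simple graph of order n(G) with ξ(S_G²) = ι(S_G²), and t ≥ 2 is an integer, then ι(S_G^t) ≤ ι(S_G²)·n(G)^{t−2}. -/

import Mathlib

/-- The closed neighborhood `N[A]` of a set of vertices. -/
def closedNbhd {V : Type*} (G : SimpleGraph V) (A : Set V) : Set V :=
  {v | v ∈ A ∨ ∃ a ∈ A, G.Adj a v}

/-- A set of vertices is independent if it contains no edge. -/
def IndepSet {V : Type*} (G : SimpleGraph V) (S : Set V) : Prop :=
  ∀ u ∈ S, ∀ v ∈ S, ¬ G.Adj u v

/-- `A` is isolating if the vertices outside `N[A]` form an independent set. -/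
def IsIsolating {V : Type*} (G : SimpleGraph V) (A : Set V) : Prop :=
  IndepSet G (closedNbhd G A)ᶜ

/-- The isolation number `ι(G)`. -/
noncomputable def isolationNum {V : Type*} (G : SimpleGraph V) : ℕ :=
  sInf {n | ∃ A : Set V, IsIsolating G A ∧ A.ncard = n}

/-- `D` is a dominating set if `N[D] = V(G)`. -/
def IsDominating {V : Type*} (G : SimpleGraph V) (D : Set V) : Prop :=
  closedNbhd G D = Set.univ

/-- The domination number `γ(G)`. -/
noncomputable def dominationNum {V : Type*} (G : SimpleGraph V) : ℕ :=
  sInf {n | ∃ D : Set V, IsDominating G D ∧ D.ncard = n}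
/-- The generalized Sierpiński graph `S_G^t` on words of length `t` over `V(G)`. -/
def sierpinskiGraph {V : Type*} (G : SimpleGraph V) (t : ℕ) : SimpleGraph (Fin t → V) where
  Adj u v := ∃ i : Fin t, (∀ j, j < i → u j = v j) ∧ u i ≠ v i ∧ G.Adj (u i) (v i) ∧
      ∀ j, i < j → u j = v i ∧ v j = u i
  symm := by
    constructor
    rintro u v ⟨i, h1, h2, h3, h4⟩
    exact ⟨i, fun j hj => (h1 j hj).symm, h2.symm, h3.symm,
      fun j hj => ⟨(h4 j hj).2, (h4 j hj).1⟩⟩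
  loopless := by
    constructor
    rintro u ⟨i, -, h2, -, -⟩
    exact h2 rfl

/-- The extreme vertices of `S_G^t`: the constant words. -/
def extremeVertices (V : Type*) (t : ℕ) : Set (Fin t → V) :=
  {w | ∃ x : V, w = fun _ => x}
/-- `ξ(S_G²)`: the minimum size of an isolating set `D` of `S_G²` of size at most
`γ(S_G²)` such that no two extreme vertices `ii`, `jj` with `ij ∈ E(G)` both lie
outside `N[D]`. -/
noncomputable def xiNum {V : Type*} (G : SimpleGraph V) : ℕ :=
  sInf {n | ∃ D : Set (Fin 2 → V), IsIsolating (sierpinskiGraph G 2) D ∧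
      D.ncard ≤ dominationNum (sierpinskiGraph G 2) ∧
      (∀ i j : V, ((fun _ => i) : Fin 2 → V) ∉ closedNbhd (sierpinskiGraph G 2) D →
        ((fun _ => j) : Fin 2 → V) ∉ closedNbhd (sierpinskiGraph G 2) D → ¬ G.Adj i j) ∧
      D.ncard = n}

/-!
Let `D` be an isolating set of `S_G²` realising `ξ(S_G²) = ι(S_G²)`, and let `A ⊆ V(S_G^t)` be the
set of words whose last two letters form a vertex of `D`; then `|A| = |D| · n(G)^{t-2}`. Every word
whose suffix lies in `N[D]` lies in `N[A]`. An edge of `S_G^t` either stays inside a copy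
`w · S_G²`, and then its two suffixes form an edge of `S_G²`, or it changes an earlier letter, and
then the suffixes are extreme vertices `ii`, `jj` with `ij ∈ E(G)`. In both cases the choice of `D`
forbids both suffixes to lie outside `N[D]`, so `A` is isolating.
-/

section Sierpinski

variable {V : Type*} (G : SimpleGraph V) {s m : ℕ}

theorem sierpinskiGraph_adj_append (p : Fin s → V) {a b : Fin m → V}
    (h : (sierpinskiGraph G m).Adj a b) :
    (sierpinskiGraph G (s + m)).Adj (Fin.append p a) (Fin.append p b) := by
  obtain ⟨i, hlt, hne, hadj, hgt⟩ := h
  refine ⟨Fin.natAdd s i, fun j hj ↦ ?_, by simpa using hne, by simpa using hadj, fun j hj ↦ ?_⟩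
  · induction j using Fin.addCases with
    | left j => simp
    | right j => simpa using hlt j ((Fin.natAdd_lt_natAdd_iff s).1 hj)
  · induction j using Fin.addCases with
    | left j => simp only [Fin.lt_def, Fin.val_castAdd, Fin.val_natAdd] at hj; omega
    | right j => simpa using hgt j ((Fin.natAdd_lt_natAdd_iff s).1 hj)

theorem sierpinskiGraph_adj_suffix {u v : Fin (s + m) → V}
    (h : (sierpinskiGraph G (s + m)).Adj u v) :
    (sierpinskiGraph G m).Adj (fun k ↦ u (Fin.natAdd s k)) (fun k ↦ v (Fin.natAdd s k)) ∨
      ∃ x y, G.Adj x y ∧ (fun k ↦ u (Fin.natAdd s k)) = (fun _ ↦ x) ∧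
        (fun k ↦ v (Fin.natAdd s k)) = (fun _ ↦ y) := by
  obtain ⟨i, hlt, hne, hadj, hgt⟩ := h
  induction i using Fin.addCases with
  | left i =>
    have hlt : ∀ k : Fin m, Fin.castAdd m i < Fin.natAdd s k := fun k ↦ by
      simp only [Fin.lt_def, Fin.val_castAdd, Fin.val_natAdd]; omega
    exact Or.inr ⟨v (Fin.castAdd m i), u (Fin.castAdd m i), hadj.symm,
      funext fun k ↦ (hgt _ (hlt k)).1, funext fun k ↦ (hgt _ (hlt k)).2⟩
  | right i =>
    refine Or.inl ⟨i, fun j hj ↦ hlt _ ((Fin.natAdd_lt_natAdd_iff s).2 hj), hne, hadj,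
      fun j hj ↦ hgt _ ((Fin.natAdd_lt_natAdd_iff s).2 hj)⟩

def liftSuffix (s : ℕ) (D : Set (Fin m → V)) : Set (Fin (s + m) → V) :=
  {w | (fun k ↦ w (Fin.natAdd s k)) ∈ D}

theorem mem_closedNbhd_liftSuffix {D : Set (Fin m → V)} {w : Fin (s + m) → V}
    (hw : (fun k ↦ w (Fin.natAdd s k)) ∈ closedNbhd (sierpinskiGraph G m) D) :
    w ∈ closedNbhd (sierpinskiGraph G (s + m)) (liftSuffix s D) := by
  set p : Fin s → V := fun k ↦ w (Fin.castAdd m k)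
  have hw_eq : Fin.append p (fun k ↦ w (Fin.natAdd s k)) = w := Fin.append_castAdd_natAdd
  rcases hw with hwD | ⟨a, haD, ha⟩
  · exact Or.inl hwD
  · refine Or.inr ⟨Fin.append p a, by simpa [liftSuffix] using haD, ?_⟩
    simpa only [hw_eq] using sierpinskiGraph_adj_append G p ha

theorem isIsolating_liftSuffix {D : Set (Fin m → V)}
    (hD : IsIsolating (sierpinskiGraph G m) D)
    (hext : ∀ x y : V, (fun _ ↦ x) ∉ closedNbhd (sierpinskiGraph G m) D →
      (fun _ ↦ y) ∉ closedNbhd (sierpinskiGraph G m) D → ¬ G.Adj x y) :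
    IsIsolating (sierpinskiGraph G (s + m)) (liftSuffix s D) := by
  intro u hu v hv huv
  have hu' := mt (mem_closedNbhd_liftSuffix G) hu
  have hv' := mt (mem_closedNbhd_liftSuffix G) hv
  rcases sierpinskiGraph_adj_suffix G huv with hadj | ⟨x, y, hxy, hux, hvy⟩
  · exact hD _ hu' _ hv' hadj
  · rw [hux] at hu'
    rw [hvy] at hv'
    exact hext x y hu' hv' hxy

theorem ncard_liftSuffix [Fintype V] (D : Set (Fin m → V)) :
    (liftSuffix s D).ncard = D.ncard * Fintype.card V ^ s := by
  have : liftSuffix s D = (Fin.appendEquiv s m).symm ⁻¹' (Set.univ ×ˢ D) := by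
    ext w; simp [liftSuffix]
  rw [this, Set.ncard_preimage_of_injective_subset_range (Fin.appendEquiv s m).symm.injective
    (by simp), Set.ncard_prod, Set.ncard_univ, Nat.card_fun, Nat.card_eq_fintype_card,
    Nat.card_fin, mul_comm]

end Sierpinski

theorem IsDominating.isIsolating {V : Type*} {G : SimpleGraph V} {D : Set V}
    (hD : IsDominating G D) : IsIsolating G D := by
  intro u hu
  exact absurd (hD ▸ Set.mem_univ u) hu

theorem exists_isDominating_ncard_eq_dominationNum {V : Type*} (G : SimpleGraph V) :
    ∃ D, IsDominating G D ∧ D.ncard = dominationNum G :=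
  Nat.sInf_mem (s := {n | ∃ D, IsDominating G D ∧ D.ncard = n})
    ⟨_, Set.univ, Set.eq_univ_of_forall fun _ ↦ Or.inl trivial, rfl⟩

theorem exists_ncard_eq_xiNum {V : Type*} (G : SimpleGraph V) :
    ∃ D : Set (Fin 2 → V), IsIsolating (sierpinskiGraph G 2) D ∧
      (∀ x y : V, (fun _ ↦ x) ∉ closedNbhd (sierpinskiGraph G 2) D →
        (fun _ ↦ y) ∉ closedNbhd (sierpinskiGraph G 2) D → ¬ G.Adj x y) ∧
      D.ncard = xiNum G := by
  obtain ⟨D₀, hdom, hcard⟩ := exists_isDominating_ncard_eq_dominationNum (sierpinskiGraph G 2)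
  obtain ⟨D, hiso, -, hext, hD⟩ : xiNum G ∈ _ := Nat.sInf_mem
    ⟨_, D₀, hdom.isIsolating, hcard.le, fun _ _ hx ↦ absurd (hdom ▸ trivial) hx, rfl⟩
  exact ⟨D, hiso, hext, hD⟩

/-- If `ξ(S_G²) = ι(S_G²)` and `t ≥ 2`, then `ι(S_G^t) ≤ ι(S_G²) · n(G)^{t−2}`. -/
theorem isolation_sierpinski_le_isolation_mul
    {V : Type*} [Fintype V] (G : SimpleGraph V) (t : ℕ) (ht : 2 ≤ t)
    (hxi : xiNum G = isolationNum (sierpinskiGraph G 2)) :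
    isolationNum (sierpinskiGraph G t) ≤
      isolationNum (sierpinskiGraph G 2) * Fintype.card V ^ (t - 2) := by
  obtain ⟨s, rfl⟩ := Nat.exists_eq_add_of_le' ht
  obtain ⟨D, hiso, hext, hcard⟩ := exists_ncard_eq_xiNum G
  calc isolationNum (sierpinskiGraph G (s + 2))
      ≤ (liftSuffix s D).ncard := Nat.sInf_le ⟨_, isIsolating_liftSuffix G hiso hext, rfl⟩
    _ = isolationNum (sierpinskiGraph G 2) * Fintype.card V ^ (s + 2 - 2) := by
      rw [ncard_liftSuffix, hcard, hxi, Nat.add_sub_cancel]
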